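/- Let f : {0,...,2^n - 1} → {0,1}, let m ≤ n, and suppose there exists a constant D ≥ 0 such that for all 0 ≤ c_1 < c_2 < 2^{n-m}, |∑_{b=0}^{2^m - 1} (-1)^{f(b + 2^m c_1) + f(b + 2^m c_2)}| ≤ D. Then for every r ∈ {0,1}^n, the Fourier coefficient satisfies |f̂(r)|^2 ≤ 2^{m - 2n}(2^{n-m} · 2^m + 2^{2(n-m)} · D) = 2^{m-n} + 2^{m - 2n} · 2^{2(n-m)} · D. -/

import Mathlib

open Finset

def binInner (n a r : ℕ) : ℕ :=
  ∑ i ∈ Finset.range n, if a.testBit i ∧ r.testBit i then 1 else 0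

noncomputable def fhatN (n : ℕ) (f : ℕ → Bool) (r : ℕ) : ℝ :=
  (2 : ℝ) ^ (-(n : ℝ)) *
    ∑ a ∈ Finset.range (2 ^ n), (-1 : ℝ) ^ ((f a).toNat + binInner n a r)

lemma testBit_low {b m : ℕ} (c i : ℕ) (hb : b < 2 ^ m) (hi : i < m) :
    (b + 2 ^ m * c).testBit i = b.testBit i := by
  have h : (b + 2 ^ m * c) % 2 ^ m = b := by
    simp [Nat.add_mul_mod_self_left, Nat.mod_eq_of_lt hb]
  conv_rhs => rw [← h, Nat.testBit_mod_two_pow]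
  simp [hi]

lemma testBit_high {b m : ℕ} (c i : ℕ) (hb : b < 2 ^ m) (hi : m ≤ i) :
    (b + 2 ^ m * c).testBit i = c.testBit (i - m) := by
  have h : (b + 2 ^ m * c) / 2 ^ i = c / 2 ^ (i - m) := by
    rw [show (2:ℕ) ^ i = 2 ^ m * 2 ^ (i - m) by rw [← pow_add, Nat.add_sub_cancel' hi],
      ← Nat.div_div_eq_div_mul, Nat.add_mul_div_left _ _ (Nat.two_pow_pos m),
      Nat.div_eq_of_lt hb, Nat.zero_add]
  rw [Nat.testBit_eq_decide_div_mod_eq, Nat.testBit_eq_decide_div_mod_eq, h]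

lemma binInner_split {b m : ℕ} (n r c : ℕ) (hm : m ≤ n) (hb : b < 2 ^ m) :
    binInner n (b + 2 ^ m * c) r
      = binInner m b r
        + ∑ i ∈ Finset.Ico m n, (if c.testBit (i - m) ∧ r.testBit i then 1 else 0) := by
  unfold binInner
  rw [Finset.range_eq_Ico, ← Finset.sum_Ico_consecutive _ (Nat.zero_le m) hm,
    ← Finset.range_eq_Ico]
  congr 1
  · exact Finset.sum_congr rfl fun i hi => by
      rw [testBit_low c i hb (Finset.mem_range.mp hi)]
  · exact Finset.sum_congr rfl fun i hi => by
      rw [testBit_high c i hb (Finset.mem_Ico.mp hi).1]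

lemma sum_decomp (M K : ℕ) (g : ℕ → ℝ) :
    ∑ a ∈ Finset.range (M * K), g a
      = ∑ b ∈ Finset.range M, ∑ c ∈ Finset.range K, g (b + M * c) := by
  rcases Nat.eq_zero_or_pos M with hM | hM
  · simp [hM]
  rw [← Finset.sum_product']
  refine Finset.sum_nbij' (fun a => (a % M, a / M)) (fun p => p.1 + M * p.2) ?_ ?_ ?_ ?_ ?_
  · intro a ha
    simp only [Finset.mem_range] at ha
    simp only [Finset.mem_product, Finset.mem_range]
    exact ⟨Nat.mod_lt _ hM, Nat.div_lt_of_lt_mul ha⟩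
  · rintro ⟨p1, p2⟩ hp
    simp only [Finset.mem_product, Finset.mem_range] at hp
    simp only [Finset.mem_range]
    calc p1 + M * p2 < M + M * p2 := by omega
      _ = M * (p2 + 1) := by ring
      _ ≤ M * K := Nat.mul_le_mul_left _ hp.2
  · intro a _
    simp [Nat.mod_add_div]
  · rintro ⟨p1, p2⟩ hp
    simp only [Finset.mem_product, Finset.mem_range] at hp
    simp [Nat.add_mul_mod_self_left, Nat.mod_eq_of_lt hp.1,
      Nat.add_mul_div_left _ _ hM, Nat.div_eq_of_lt hp.1]
  · intro a _
    simp [Nat.mod_add_div]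

lemma neg_one_pow_cancel (p q s : ℕ) :
    (-1 : ℝ) ^ (p + s) * (-1) ^ (q + s) = (-1) ^ (p + q) := by
  rw [← pow_add, show p + s + (q + s) = p + q + 2 * s by ring, pow_add, pow_mul]
  norm_num

theorem stmt11 (n m : ℕ) (hm : m ≤ n) (f : ℕ → Bool) (D : ℝ) (hD : 0 ≤ D)
    (hCorr : ∀ c₁ c₂ : ℕ, c₁ < c₂ → c₂ < 2 ^ (n - m) →
      |∑ b ∈ Finset.range (2 ^ m),
          (-1 : ℝ) ^ ((f (b + 2 ^ m * c₁)).toNat + (f (b + 2 ^ m * c₂)).toNat)| ≤ D) :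
    ∀ r < 2 ^ n,
      (fhatN n f r) ^ 2
        ≤ (2 : ℝ) ^ m / (2 : ℝ) ^ n
            + (2 : ℝ) ^ m * (2 : ℝ) ^ (2 * (n - m)) * D / (2 : ℝ) ^ (2 * n) := by
  intro r _
  set K := 2 ^ (n - m) with hK
  set ε : ℕ → ℝ := fun a => (-1 : ℝ) ^ ((f a).toNat + binInner n a r) with hε
  set H : ℕ → ℕ :=
    fun c => ∑ i ∈ Finset.Ico m n, (if c.testBit (i - m) ∧ r.testBit i then 1 else 0) with hH
  set S : ℝ := ∑ a ∈ Finset.range (2 ^ n), ε a with hS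
  -- decompose
  have hpow : 2 ^ n = 2 ^ m * K := by
    rw [hK, ← pow_add, Nat.add_sub_cancel' hm]
  have hSdecomp : S = ∑ b ∈ Finset.range (2 ^ m), ∑ c ∈ Finset.range K, ε (b + 2 ^ m * c) := by
    rw [hS, hpow, sum_decomp]
  -- product formula
  have hprod : ∀ b < 2 ^ m, ∀ c₁ c₂ : ℕ,
      ε (b + 2 ^ m * c₁) * ε (b + 2 ^ m * c₂)
        = (-1 : ℝ) ^ (H c₁ + H c₂)
            * (-1 : ℝ) ^ ((f (b + 2 ^ m * c₁)).toNat + (f (b + 2 ^ m * c₂)).toNat) := by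
    intro b hb c₁ c₂
    simp only [hε]
    rw [binInner_split n r c₁ hm hb, binInner_split n r c₂ hm hb]
    set B := binInner m b r
    set t₁ := (f (b + 2 ^ m * c₁)).toNat
    set t₂ := (f (b + 2 ^ m * c₂)).toNat
    rw [show t₁ + (B + H c₁) = (t₁ + H c₁) + B by ring,
      show t₂ + (B + H c₂) = (t₂ + H c₂) + B by ring,
      neg_one_pow_cancel, show t₁ + H c₁ + (t₂ + H c₂) = (H c₁ + H c₂) + (t₁ + t₂) by ring,
      pow_add]
  -- the correlation sums
  have hA : ∀ c₁ ∈ Finset.range K, ∀ c₂ ∈ Finset.range K,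
      (∑ b ∈ Finset.range (2 ^ m), ε (b + 2 ^ m * c₁) * ε (b + 2 ^ m * c₂))
        ≤ if c₁ = c₂ then ((2 : ℝ) ^ m - D) + D else D := by
    intro c₁ h₁ c₂ h₂
    simp only [Finset.mem_range] at h₁ h₂
    rcases eq_or_ne c₁ c₂ with h | h
    · subst h
      simp only [if_pos rfl, sub_add_cancel]
      have : ∀ b ∈ Finset.range (2 ^ m), ε (b + 2 ^ m * c₁) * ε (b + 2 ^ m * c₁) = 1 := by
        intro b _
        simp only [hε, ← pow_add, show ∀ k : ℕ, k + k = 2 * k from fun k => by ring, pow_mul]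
        norm_num
      rw [Finset.sum_congr rfl this, Finset.sum_const, Finset.card_range]
      simp
    · rw [if_neg h]
      have heq : (∑ b ∈ Finset.range (2 ^ m), ε (b + 2 ^ m * c₁) * ε (b + 2 ^ m * c₂))
          = (-1 : ℝ) ^ (H c₁ + H c₂)
              * ∑ b ∈ Finset.range (2 ^ m),
                  (-1 : ℝ) ^ ((f (b + 2 ^ m * c₁)).toNat + (f (b + 2 ^ m * c₂)).toNat) := by
        rw [Finset.mul_sum]
        exact Finset.sum_congr rfl fun b hb => hprod b (Finset.mem_range.mp hb) c₁ c₂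
      have habs : |∑ b ∈ Finset.range (2 ^ m),
          (-1 : ℝ) ^ ((f (b + 2 ^ m * c₁)).toNat + (f (b + 2 ^ m * c₂)).toNat)| ≤ D := by
        rcases lt_or_gt_of_ne h with hlt | hlt
        · exact hCorr c₁ c₂ hlt h₂
        · have := hCorr c₂ c₁ hlt h₁
          simpa [add_comm] using this
      calc (∑ b ∈ Finset.range (2 ^ m), ε (b + 2 ^ m * c₁) * ε (b + 2 ^ m * c₂))
          ≤ |∑ b ∈ Finset.range (2 ^ m), ε (b + 2 ^ m * c₁) * ε (b + 2 ^ m * c₂)| :=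
            le_abs_self _
        _ = |∑ b ∈ Finset.range (2 ^ m),
              (-1 : ℝ) ^ ((f (b + 2 ^ m * c₁)).toNat + (f (b + 2 ^ m * c₂)).toNat)| := by
            rw [heq, abs_mul, abs_pow, abs_neg, abs_one, one_pow, one_mul]
        _ ≤ D := habs
  -- Cauchy--Schwarz
  have hCS : S ^ 2 ≤ (2 : ℝ) ^ m
      * ∑ b ∈ Finset.range (2 ^ m), (∑ c ∈ Finset.range K, ε (b + 2 ^ m * c)) ^ 2 := by
    rw [hSdecomp]
    have := sq_sum_le_card_mul_sum_sq (s := Finset.range (2 ^ m))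
      (f := fun b => ∑ c ∈ Finset.range K, ε (b + 2 ^ m * c))
    simpa [Finset.card_range] using this
  -- expand square
  have hsq : (∑ b ∈ Finset.range (2 ^ m), (∑ c ∈ Finset.range K, ε (b + 2 ^ m * c)) ^ 2)
      = ∑ c₁ ∈ Finset.range K, ∑ c₂ ∈ Finset.range K,
          ∑ b ∈ Finset.range (2 ^ m), ε (b + 2 ^ m * c₁) * ε (b + 2 ^ m * c₂) := by
    calc (∑ b ∈ Finset.range (2 ^ m), (∑ c ∈ Finset.range K, ε (b + 2 ^ m * c)) ^ 2)
        = ∑ b ∈ Finset.range (2 ^ m), ∑ c₁ ∈ Finset.range K, ∑ c₂ ∈ Finset.range K,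
            ε (b + 2 ^ m * c₁) * ε (b + 2 ^ m * c₂) := by
          refine Finset.sum_congr rfl fun b _ => ?_
          rw [sq, Finset.sum_mul_sum]
      _ = _ := by
          rw [Finset.sum_comm]
          exact Finset.sum_congr rfl fun c₁ _ => Finset.sum_comm
  have hKpos : (0 : ℝ) ≤ (K : ℝ) := by positivity
  have hinner : (∑ c₁ ∈ Finset.range K, ∑ c₂ ∈ Finset.range K,
        ∑ b ∈ Finset.range (2 ^ m), ε (b + 2 ^ m * c₁) * ε (b + 2 ^ m * c₂))
      ≤ (K : ℝ) * (2 : ℝ) ^ m + (K : ℝ) ^ 2 * D := by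
    have step1 : (∑ c₁ ∈ Finset.range K, ∑ c₂ ∈ Finset.range K,
          ∑ b ∈ Finset.range (2 ^ m), ε (b + 2 ^ m * c₁) * ε (b + 2 ^ m * c₂))
        ≤ ∑ c₁ ∈ Finset.range K, ∑ c₂ ∈ Finset.range K,
            (if c₁ = c₂ then ((2 : ℝ) ^ m - D) + D else D) := by
      refine Finset.sum_le_sum fun c₁ h₁ => Finset.sum_le_sum fun c₂ h₂ => hA c₁ h₁ c₂ h₂
    refine step1.trans ?_
    have : ∀ c₁ ∈ Finset.range K,
        (∑ c₂ ∈ Finset.range K, (if c₁ = c₂ then ((2 : ℝ) ^ m - D) + D else D))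
          = ((2 : ℝ) ^ m - D) + (K : ℝ) * D := by
      intro c₁ h₁
      have : (fun c₂ => if c₁ = c₂ then ((2 : ℝ) ^ m - D) + D else D)
          = fun c₂ => (if c₁ = c₂ then (2 : ℝ) ^ m - D else 0) + D := by
        funext c₂; split <;> simp
      rw [this, Finset.sum_add_distrib, Finset.sum_ite_eq _ c₁ (fun _ => (2:ℝ)^m - D),
        if_pos h₁, Finset.sum_const, Finset.card_range, nsmul_eq_mul]
    rw [Finset.sum_congr rfl this, Finset.sum_const, Finset.card_range, nsmul_eq_mul]
    have hDK : 0 ≤ (K : ℝ) * D := mul_nonneg hKpos hD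
    nlinarith [hKpos, hD]
  -- combine
  have hS2 : S ^ 2 ≤ (2 : ℝ) ^ (n + m) + (2 : ℝ) ^ m * (2 : ℝ) ^ (2 * (n - m)) * D := by
    have hKr : (K : ℝ) = (2 : ℝ) ^ (n - m) := by
      rw [hK]; push_cast; ring
    have e1 : (2 : ℝ) ^ m * ((2 : ℝ) ^ (n - m) * (2 : ℝ) ^ m) = (2 : ℝ) ^ (n + m) := by
      rw [← pow_add, ← pow_add]; congr 1; omega
    have e2 : ((2 : ℝ) ^ (n - m)) ^ 2 = (2 : ℝ) ^ (2 * (n - m)) := by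
      rw [← pow_mul, Nat.mul_comm]
    have h1 : (2 : ℝ) ^ m * ((K : ℝ) * (2 : ℝ) ^ m + (K : ℝ) ^ 2 * D)
        = (2 : ℝ) ^ (n + m) + (2 : ℝ) ^ m * (2 : ℝ) ^ (2 * (n - m)) * D := by
      rw [hKr]
      calc (2 : ℝ) ^ m * ((2 : ℝ) ^ (n - m) * (2 : ℝ) ^ m + ((2 : ℝ) ^ (n - m)) ^ 2 * D)
          = (2 : ℝ) ^ m * ((2 : ℝ) ^ (n - m) * (2 : ℝ) ^ m)
              + (2 : ℝ) ^ m * (((2 : ℝ) ^ (n - m)) ^ 2) * D := by ring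
        _ = _ := by rw [e1, e2]
    calc S ^ 2 ≤ (2 : ℝ) ^ m
          * ∑ b ∈ Finset.range (2 ^ m), (∑ c ∈ Finset.range K, ε (b + 2 ^ m * c)) ^ 2 := hCS
      _ ≤ (2 : ℝ) ^ m * ((K : ℝ) * (2 : ℝ) ^ m + (K : ℝ) ^ 2 * D) := by
          rw [hsq]
          exact mul_le_mul_of_nonneg_left hinner (by positivity)
      _ = _ := h1
  -- final arithmetic
  have hfhat : fhatN n f r = S / (2 : ℝ) ^ n := by
    rw [hS]
    unfold fhatN
    rw [Real.rpow_neg (by norm_num : (0:ℝ) ≤ 2), Real.rpow_natCast, inv_mul_eq_div]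
  rw [hfhat, div_pow]
  have h2n : ((2 : ℝ) ^ n) ^ 2 = (2 : ℝ) ^ (2 * n) := by
    rw [← pow_mul]; ring_nf
  rw [h2n]
  have hpos : (0 : ℝ) < (2 : ℝ) ^ (2 * n) := by positivity
  rw [div_le_iff₀ hpos]
  calc S ^ 2 ≤ (2 : ℝ) ^ (n + m) + (2 : ℝ) ^ m * (2 : ℝ) ^ (2 * (n - m)) * D := hS2
    _ = ((2 : ℝ) ^ m / (2 : ℝ) ^ n
          + (2 : ℝ) ^ m * (2 : ℝ) ^ (2 * (n - m)) * D / (2 : ℝ) ^ (2 * n))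
        * (2 : ℝ) ^ (2 * n) := by
      have e3 : (2 : ℝ) ^ (2 * n) = (2 : ℝ) ^ n * (2 : ℝ) ^ n := by rw [two_mul, pow_add]
      have e4 : (2 : ℝ) ^ (n + m) = (2 : ℝ) ^ n * (2 : ℝ) ^ m := by rw [pow_add]
      have hn : (2 : ℝ) ^ n ≠ 0 := by positivity
      rw [e3, e4]
      field_simp
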